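/- arXiv:2303.05532 — 3 statements merged into one kernel-verified Lean document; each statement's English description precedes it below -/
import Mathlib

section
/- Let V_d = diag(v₁,...,v_m) ⊗ I₂ be a diagonal positive matrix with doubly-degenerate entries and J the symplectic form commuting with V_d. Then, whenever v_α v_β ≠ 1 for all α, β, for every symmetric matrix D the equation D = V_d L̃ V_d + J L̃ J has a unique solution L̃; that is, the linear map L ↦ V L V + J L J on symmetric matrices is invertible whenever no product of two symplectic eigenvalues of V equals 1. -/
open Matrix

/-- Diagonal covariance matrix with doubly-degenerate symplectic eigenvalues
`v₁, …, v_m`: `V_d = diag(v) ⊕ diag(v)`. -/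
def Vd {m : ℕ} (v : Fin m → ℝ) : Matrix (Fin m ⊕ Fin m) (Fin m ⊕ Fin m) ℝ :=
  Matrix.fromBlocks (Matrix.diagonal v) 0 0 (Matrix.diagonal v)

/-- The standard symplectic form `J = ((0, -I), (I, 0))`. -/
def Jsymp (m : ℕ) : Matrix (Fin m ⊕ Fin m) (Fin m ⊕ Fin m) ℝ :=
  Matrix.fromBlocks 0 (-1) 1 0

lemma Jmul_inl {m : ℕ} (M : Matrix (Fin m ⊕ Fin m) (Fin m ⊕ Fin m) ℝ) (i : Fin m)
    (β : Fin m ⊕ Fin m) : (Jsymp m * M) (Sum.inl i) β = -(M (Sum.inr i) β) := by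
  simp [Jsymp, Matrix.mul_apply, Fintype.sum_sum_type, Matrix.fromBlocks, Matrix.one_apply]

lemma Jmul_inr {m : ℕ} (M : Matrix (Fin m ⊕ Fin m) (Fin m ⊕ Fin m) ℝ) (i : Fin m)
    (β : Fin m ⊕ Fin m) : (Jsymp m * M) (Sum.inr i) β = M (Sum.inl i) β := by
  simp [Jsymp, Matrix.mul_apply, Fintype.sum_sum_type, Matrix.fromBlocks, Matrix.one_apply]

lemma mulJ_inl {m : ℕ} (M : Matrix (Fin m ⊕ Fin m) (Fin m ⊕ Fin m) ℝ) (j : Fin m)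
    (α : Fin m ⊕ Fin m) : (M * Jsymp m) α (Sum.inl j) = M α (Sum.inr j) := by
  simp [Jsymp, Matrix.mul_apply, Fintype.sum_sum_type, Matrix.fromBlocks, Matrix.one_apply]

lemma mulJ_inr {m : ℕ} (M : Matrix (Fin m ⊕ Fin m) (Fin m ⊕ Fin m) ℝ) (j : Fin m)
    (α : Fin m ⊕ Fin m) : (M * Jsymp m) α (Sum.inr j) = -(M α (Sum.inl j)) := by
  simp [Jsymp, Matrix.mul_apply, Fintype.sum_sum_type, Matrix.fromBlocks, Matrix.one_apply]

lemma Vd_eq_diagonal {m : ℕ} (v : Fin m → ℝ) : Vd v = Matrix.diagonal (Sum.elim v v) := by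
  rw [Vd, Matrix.fromBlocks_diagonal]

lemma entry_ll {m : ℕ} (v : Fin m → ℝ) (L : Matrix (Fin m ⊕ Fin m) (Fin m ⊕ Fin m) ℝ)
    (i j : Fin m) :
    (Vd v * L * Vd v + Jsymp m * L * Jsymp m) (Sum.inl i) (Sum.inl j)
      = v i * L (Sum.inl i) (Sum.inl j) * v j - L (Sum.inr i) (Sum.inr j) := by
  have h : (Jsymp m * L * Jsymp m) (Sum.inl i) (Sum.inl j) = -(L (Sum.inr i) (Sum.inr j)) := by
    rw [mulJ_inl, Jmul_inl]
  simp [Vd_eq_diagonal, Matrix.diagonal_mul, Matrix.mul_diagonal, h, sub_eq_add_neg]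

lemma entry_rr {m : ℕ} (v : Fin m → ℝ) (L : Matrix (Fin m ⊕ Fin m) (Fin m ⊕ Fin m) ℝ)
    (i j : Fin m) :
    (Vd v * L * Vd v + Jsymp m * L * Jsymp m) (Sum.inr i) (Sum.inr j)
      = v i * L (Sum.inr i) (Sum.inr j) * v j - L (Sum.inl i) (Sum.inl j) := by
  have h : (Jsymp m * L * Jsymp m) (Sum.inr i) (Sum.inr j) = -(L (Sum.inl i) (Sum.inl j)) := by
    rw [mulJ_inr, Jmul_inr]
  simp [Vd_eq_diagonal, Matrix.diagonal_mul, Matrix.mul_diagonal, h, sub_eq_add_neg]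

lemma entry_lr {m : ℕ} (v : Fin m → ℝ) (L : Matrix (Fin m ⊕ Fin m) (Fin m ⊕ Fin m) ℝ)
    (i j : Fin m) :
    (Vd v * L * Vd v + Jsymp m * L * Jsymp m) (Sum.inl i) (Sum.inr j)
      = v i * L (Sum.inl i) (Sum.inr j) * v j + L (Sum.inr i) (Sum.inl j) := by
  have h : (Jsymp m * L * Jsymp m) (Sum.inl i) (Sum.inr j) = L (Sum.inr i) (Sum.inl j) := by
    rw [mulJ_inr, Jmul_inl, neg_neg]
  simp [Vd_eq_diagonal, Matrix.diagonal_mul, Matrix.mul_diagonal, h]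

lemma entry_rl {m : ℕ} (v : Fin m → ℝ) (L : Matrix (Fin m ⊕ Fin m) (Fin m ⊕ Fin m) ℝ)
    (i j : Fin m) :
    (Vd v * L * Vd v + Jsymp m * L * Jsymp m) (Sum.inr i) (Sum.inl j)
      = v i * L (Sum.inr i) (Sum.inl j) * v j + L (Sum.inl i) (Sum.inr j) := by
  have h : (Jsymp m * L * Jsymp m) (Sum.inr i) (Sum.inl j) = L (Sum.inl i) (Sum.inr j) := by
    rw [mulJ_inl, Jmul_inr]
  simp [Vd_eq_diagonal, Matrix.diagonal_mul, Matrix.mul_diagonal, h]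

/-- Explicit solution of `Vd L Vd + J L J = D`. -/
noncomputable def Lsol {m : ℕ} (v : Fin m → ℝ)
    (D : Matrix (Fin m ⊕ Fin m) (Fin m ⊕ Fin m) ℝ) :
    Matrix (Fin m ⊕ Fin m) (Fin m ⊕ Fin m) ℝ :=
  Matrix.of fun α β =>
    match α, β with
    | Sum.inl i, Sum.inl j =>
        (v i * v j * D (Sum.inl i) (Sum.inl j) + D (Sum.inr i) (Sum.inr j))
          / ((v i * v j) ^ 2 - 1)
    | Sum.inr i, Sum.inr j =>
        (v i * v j * D (Sum.inr i) (Sum.inr j) + D (Sum.inl i) (Sum.inl j))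
          / ((v i * v j) ^ 2 - 1)
    | Sum.inl i, Sum.inr j =>
        (v i * v j * D (Sum.inl i) (Sum.inr j) - D (Sum.inr i) (Sum.inl j))
          / ((v i * v j) ^ 2 - 1)
    | Sum.inr i, Sum.inl j =>
        (v i * v j * D (Sum.inr i) (Sum.inl j) - D (Sum.inl i) (Sum.inr j))
          / ((v i * v j) ^ 2 - 1)

/-- If no product of two (positive) symplectic eigenvalues of `V_d` equals `1`,
the linear map `L ↦ V_d L V_d + J L J` is invertible on symmetric matrices:
it is injective and surjective there. -/
theorem sld_map_invertible_on_symmetric {m : ℕ} (v : Fin m → ℝ)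
    (hv : ∀ i, 0 < v i) (hne : ∀ a b, v a * v b ≠ 1) :
    (∀ L L' : Matrix (Fin m ⊕ Fin m) (Fin m ⊕ Fin m) ℝ, L.IsSymm → L'.IsSymm →
      Vd v * L * Vd v + Jsymp m * L * Jsymp m =
        Vd v * L' * Vd v + Jsymp m * L' * Jsymp m → L = L') ∧
    (∀ D : Matrix (Fin m ⊕ Fin m) (Fin m ⊕ Fin m) ℝ, D.IsSymm →
      ∃ L : Matrix (Fin m ⊕ Fin m) (Fin m ⊕ Fin m) ℝ, L.IsSymm ∧
        Vd v * L * Vd v + Jsymp m * L * Jsymp m = D) := by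
  have ha : ∀ i j : Fin m, (v i * v j) ^ 2 - 1 ≠ 0 := by
    intro i j h
    have hfac : (v i * v j - 1) * (v i * v j + 1) = 0 := by ring_nf; linarith [h]
    have hpos : 0 < v i * v j := mul_pos (hv i) (hv j)
    rcases mul_eq_zero.1 hfac with h1 | h1
    · exact hne i j (by linarith)
    · linarith
  constructor
  · intro L L' _ _ h
    ext α β
    have e1 := fun i j => (congrFun (congrFun h (Sum.inl i)) (Sum.inl j))
    have e2 := fun i j => (congrFun (congrFun h (Sum.inr i)) (Sum.inr j))
    have e3 := fun i j => (congrFun (congrFun h (Sum.inl i)) (Sum.inr j))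
    have e4 := fun i j => (congrFun (congrFun h (Sum.inr i)) (Sum.inl j))
    simp only [entry_ll] at e1
    simp only [entry_rr] at e2
    simp only [entry_lr] at e3
    simp only [entry_rl] at e4
    rcases α with i | i <;> rcases β with j | j
    · have key : ((v i * v j) ^ 2 - 1) *
          (L (Sum.inl i) (Sum.inl j) - L' (Sum.inl i) (Sum.inl j)) = 0 := by
        linear_combination (v i * v j) * e1 i j + e2 i j
      rcases mul_eq_zero.1 key with h1 | h1
      · exact absurd h1 (ha i j)
      · linarith
    · have key : ((v i * v j) ^ 2 - 1) *
          (L (Sum.inl i) (Sum.inr j) - L' (Sum.inl i) (Sum.inr j)) = 0 := by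
        linear_combination (v i * v j) * e3 i j - e4 i j
      rcases mul_eq_zero.1 key with h1 | h1
      · exact absurd h1 (ha i j)
      · linarith
    · have key : ((v i * v j) ^ 2 - 1) *
          (L (Sum.inr i) (Sum.inl j) - L' (Sum.inr i) (Sum.inl j)) = 0 := by
        linear_combination (v i * v j) * e4 i j - e3 i j
      rcases mul_eq_zero.1 key with h1 | h1
      · exact absurd h1 (ha i j)
      · linarith
    · have key : ((v i * v j) ^ 2 - 1) *
          (L (Sum.inr i) (Sum.inr j) - L' (Sum.inr i) (Sum.inr j)) = 0 := by
        linear_combination (v i * v j) * e2 i j + e1 i j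
      rcases mul_eq_zero.1 key with h1 | h1
      · exact absurd h1 (ha i j)
      · linarith
  · intro D hD
    have hsym : ∀ x y, D x y = D y x := fun x y => hD.apply y x
    refine ⟨Lsol v D, ?_, ?_⟩
    · rw [Matrix.IsSymm]
      ext α β
      rw [Matrix.transpose_apply]
      rcases α with i | i <;> rcases β with j | j <;>
        simp only [Lsol, Matrix.of_apply] <;>
        rw [mul_comm (v j) (v i)]
      · rw [hsym (Sum.inl j) (Sum.inl i), hsym (Sum.inr j) (Sum.inr i)]
      · rw [hsym (Sum.inr j) (Sum.inl i), hsym (Sum.inl j) (Sum.inr i)]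
      · rw [hsym (Sum.inl j) (Sum.inr i), hsym (Sum.inr j) (Sum.inl i)]
      · rw [hsym (Sum.inr j) (Sum.inr i), hsym (Sum.inl j) (Sum.inl i)]
    · ext α β
      rcases α with i | i <;> rcases β with j | j
      · rw [entry_ll]
        simp only [Lsol, Matrix.of_apply]
        field_simp [ha i j]
        ring_nf
        have h' : (-1 + v i ^ 2 * v j ^ 2) ≠ 0 := by
          intro h0; exact ha i j (by linear_combination h0)
        field_simp
        ring
      · rw [entry_lr]
        simp only [Lsol, Matrix.of_apply]
        field_simp [ha i j]
        ring_nf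
        have h' : (-1 + v i ^ 2 * v j ^ 2) ≠ 0 := by
          intro h0; exact ha i j (by linear_combination h0)
        field_simp
        ring
      · rw [entry_rl]
        simp only [Lsol, Matrix.of_apply]
        field_simp [ha i j]
        ring_nf
        have h' : (-1 + v i ^ 2 * v j ^ 2) ≠ 0 := by
          intro h0; exact ha i j (by linear_combination h0)
        field_simp
        ring
      · rw [entry_rr]
        simp only [Lsol, Matrix.of_apply]
        field_simp [ha i j]
        ring_nf
        have h' : (-1 + v i ^ 2 * v j ^ 2) ≠ 0 := by
          intro h0; exact ha i j (by linear_combination h0)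
        field_simp
        ring
end

section
/- Let F be a real symmetric positive-definite 2×2 matrix with entries F₀₀ = αθ⁻⁴ + 2βθ⁻³ + γθ⁻², F₀₁ = F₁₀ = αθ⁻³ + βθ⁻², F₁₁ = αθ⁻², where α > 0, γ > 0, αγ > β², and θ > 0. Then the (0,0) entry of F⁻¹ equals (γ - β²/α)⁻¹ θ², so that √((F⁻¹)₀₀) = (γ - β²/α)^{-1/2}·θ scales linearly in θ, whereas 1/√(F₀₀) = O(θ²) as θ → 0. -/
open Filter Topology

/-! Multiplying out, `det F = (αγ - β²) θ⁻⁴` while `F₁₁ = α θ⁻²`, so `(F⁻¹)₀₀ = F₁₁ / det F` is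
`α θ² / (αγ - β²)`, exactly quadratic in `θ`. On the other hand `F₀₀ = (α + 2βθ + γθ²) θ⁻⁴`, and the
numerator tends to `α > 0`, so `1 / √F₀₀` is `θ²` times a factor bounded near `0`. -/

namespace NuisanceQFIM

section Field

variable {K : Type*} [Field K] (α β γ θ : K)

def entry00 : K := α / θ ^ 4 + 2 * β / θ ^ 3 + γ / θ ^ 2

def entry01 : K := α / θ ^ 3 + β / θ ^ 2

def entry11 : K := α / θ ^ 2

def det : K := entry00 α β γ θ * entry11 α θ - entry01 α β θ ^ 2

variable {θ}

theorem entry00_eq_div (hθ : θ ≠ 0) :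
    entry00 α β γ θ = (α + 2 * β * θ + γ * θ ^ 2) / θ ^ 4 := by
  unfold entry00
  field_simp

theorem det_eq_div (hθ : θ ≠ 0) : det α β γ θ = (α * γ - β ^ 2) / θ ^ 4 := by
  unfold det entry00 entry01 entry11
  field_simp
  ring

variable {α}

theorem entry11_div_det (hα : α ≠ 0) (hθ : θ ≠ 0) :
    entry11 α θ / det α β γ θ = (γ - β ^ 2 / α)⁻¹ * θ ^ 2 := by
  rw [det_eq_div α β γ hθ, entry11, show γ - β ^ 2 / α = (α * γ - β ^ 2) / α by field_simp,
    inv_div]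
  field_simp

end Field

theorem sqrt_inv_mul_sq (c : ℝ) {θ : ℝ} (hθ : 0 ≤ θ) : √(c⁻¹ * θ ^ 2) = (√c)⁻¹ * θ := by
  rw [Real.sqrt_mul' _ (sq_nonneg θ), Real.sqrt_inv, Real.sqrt_sq hθ]

theorem one_div_sqrt_entry00 (α β γ : ℝ) {θ : ℝ} (hθ : θ ≠ 0) :
    1 / √(entry00 α β γ θ) = θ ^ 2 * (√(α + 2 * β * θ + γ * θ ^ 2))⁻¹ := by
  rw [entry00_eq_div α β γ hθ, Real.sqrt_div' _ (by positivity), show θ ^ 4 = (θ ^ 2) ^ 2 by ring,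
    Real.sqrt_sq (sq_nonneg θ), one_div, inv_div, div_eq_mul_inv]

theorem one_div_sqrt_entry00_isBigO {α : ℝ} (β γ : ℝ) (hα : 0 < α) :
    (fun θ ↦ 1 / √(entry00 α β γ θ)) =O[𝓝[≠] 0] fun θ ↦ θ ^ 2 := by
  have hcont : ContinuousAt (fun θ : ℝ ↦ (√(α + 2 * β * θ + γ * θ ^ 2))⁻¹) 0 :=
    ContinuousAt.inv₀ (by fun_prop) (by simpa using (Real.sqrt_pos.2 hα).ne')
  have hbounded := (hcont.tendsto.mono_left nhdsWithin_le_nhds).isBigO_one ℝ (l := 𝓝[≠] 0)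
  refine ((Asymptotics.isBigO_refl (fun θ : ℝ ↦ θ ^ 2) _).mul hbounded).congr' ?_ (by simp)
  filter_upwards [self_mem_nhdsWithin] with θ hθ
  exact (one_div_sqrt_entry00 α β γ hθ).symm

end NuisanceQFIM

theorem nuisance_parameter_linear_scaling_general (α β γ : ℝ)
    (hα : 0 < α) :
    (∀ θ : ℝ, 0 < θ →
      (α / θ ^ 2) / ((α / θ ^ 4 + 2 * β / θ ^ 3 + γ / θ ^ 2) * (α / θ ^ 2) -
          (α / θ ^ 3 + β / θ ^ 2) ^ 2) = (γ - β ^ 2 / α)⁻¹ * θ ^ 2 ∧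
      Real.sqrt ((α / θ ^ 2) / ((α / θ ^ 4 + 2 * β / θ ^ 3 + γ / θ ^ 2) * (α / θ ^ 2) -
          (α / θ ^ 3 + β / θ ^ 2) ^ 2)) = (Real.sqrt (γ - β ^ 2 / α))⁻¹ * θ) ∧
    (fun θ : ℝ => 1 / Real.sqrt (α / θ ^ 4 + 2 * β / θ ^ 3 + γ / θ ^ 2)) =O[𝓝[>] (0 : ℝ)]
      (fun θ : ℝ => θ ^ 2) := by
  refine ⟨fun θ hθ ↦ ?_, ?_⟩
  · have hinv := NuisanceQFIM.entry11_div_det β γ hα.ne' hθ.ne'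
    exact ⟨hinv, hinv ▸ NuisanceQFIM.sqrt_inv_mul_sq _ hθ.le⟩
  · exact (NuisanceQFIM.one_div_sqrt_entry00_isBigO β γ hα).mono
      (nhdsWithin_mono _ fun θ (hθ : 0 < θ) ↦ hθ.ne')

/-- For the QFIM `F` with entries `F₀₀ = αθ⁻⁴ + 2βθ⁻³ + γθ⁻²`,
`F₀₁ = F₁₀ = αθ⁻³ + βθ⁻²`, `F₁₁ = αθ⁻²` (α, γ > 0, αγ > β²), the (0,0) entry of
`F⁻¹` equals `(γ - β²/α)⁻¹ θ²`, so `√((F⁻¹)₀₀) = (γ - β²/α)^{-1/2} θ` scales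
linearly in `θ`, whereas `1/√F₀₀ = O(θ²)` as `θ → 0⁺`. -/
theorem nuisance_parameter_linear_scaling (α β γ : ℝ)
    (hα : 0 < α) (hγ : 0 < γ) (hβ : β ^ 2 < α * γ) :
    (∀ θ : ℝ, 0 < θ →
      (α / θ ^ 2) / ((α / θ ^ 4 + 2 * β / θ ^ 3 + γ / θ ^ 2) * (α / θ ^ 2) -
          (α / θ ^ 3 + β / θ ^ 2) ^ 2) = (γ - β ^ 2 / α)⁻¹ * θ ^ 2 ∧
      Real.sqrt ((α / θ ^ 2) / ((α / θ ^ 4 + 2 * β / θ ^ 3 + γ / θ ^ 2) * (α / θ ^ 2) -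
          (α / θ ^ 3 + β / θ ^ 2) ^ 2)) = (Real.sqrt (γ - β ^ 2 / α))⁻¹ * θ) ∧
    (fun θ : ℝ => 1 / Real.sqrt (α / θ ^ 4 + 2 * β / θ ^ 3 + γ / θ ^ 2)) =O[𝓝[>] (0 : ℝ)]
      (fun θ : ℝ => θ ^ 2) :=
  nuisance_parameter_linear_scaling_general α β γ hα
end

section
/- For N = ((0,1),(1,0)) (perturbation of coupling strength) and H̄ = ((-i,1),(1,i)), one has (H̄N⁻¹)ᵏ = 2^{k-1}(H̄N⁻¹) for all k ≥ 1, so the matrices Wₖ := N⁻¹(H̄N⁻¹)ᵏ satisfy Wₖ ≠ 0 for all k ≥ 1, and hence the formal Neumann series θ⁻¹N⁻¹Σ_k θ⁻ᵏ(H̄N⁻¹)ᵏ never terminates and diverges for |θ| < 2. -/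
open Matrix

def HbarC : Matrix (Fin 2) (Fin 2) ℂ := !![-Complex.I, 1; 1, Complex.I]

def sigmaX : Matrix (Fin 2) (Fin 2) ℂ := !![0, 1; 1, 0]

lemma Tsq : (HbarC * sigmaX) ^ 2 = (2 : ℂ) • (HbarC * sigmaX) := by
  rw [pow_two]
  ext i j
  fin_cases i <;> fin_cases j <;>
    simp [HbarC, sigmaX, Matrix.mul_apply, Fin.sum_univ_two, Complex.ext_iff] <;>
    ring_nf <;> simp [Complex.I_sq, Complex.ext_iff] <;> ring

lemma Tpow (k : ℕ) (hk : 1 ≤ k) :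
    (HbarC * sigmaX) ^ k = ((2 : ℂ) ^ (k - 1)) • (HbarC * sigmaX) := by
  induction k with
  | zero => omega
  | succ n ih =>
    rcases Nat.eq_or_lt_of_le hk with h | h
    · simp [← h]
    · have hn : 1 ≤ n := by omega
      rw [pow_succ, ih hn, smul_mul_assoc, ← pow_two, Tsq, smul_smul]
      have h2 : (2:ℂ)^(n-1) * 2 = 2^(n+1-1) := by
        rw [Nat.add_sub_cancel, ← pow_succ]
        congr 1
        omega
      rw [h2]

lemma T00 : (HbarC * sigmaX) 0 0 = 1 := by
  simp [HbarC, sigmaX, Matrix.mul_apply, Fin.sum_univ_two]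

/-- With `T := H̄ σ_x` (noting `σ_x⁻¹ = σ_x`), one has `T² = 2T`, hence
`Tᵏ = 2^{k-1} T ≠ 0` for all `k ≥ 1`: the formal Neumann series
`Σ_k θ⁻ᵏ Tᵏ` never terminates, and it diverges whenever `0 < |θ| < 2`. -/
theorem naive_neumann_series_diverges :
    (HbarC * sigmaX) ^ 2 = (2 : ℂ) • (HbarC * sigmaX) ∧
    (∀ k : ℕ, 1 ≤ k →
      (HbarC * sigmaX) ^ k = ((2 : ℂ) ^ (k - 1)) • (HbarC * sigmaX) ∧
      (HbarC * sigmaX) ^ k ≠ 0) ∧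
    (∀ θ : ℂ, θ ≠ 0 → ‖θ‖ < 2 →
      ¬ Summable (fun k : ℕ => θ⁻¹ ^ k • (HbarC * sigmaX) ^ k)) := by
  refine ⟨Tsq, fun k hk => ⟨Tpow k hk, ?_⟩, fun θ hθ hθ2 hsum => ?_⟩
  · rw [Tpow k hk]
    intro h
    have h0 : ((2 : ℂ) ^ (k - 1)) * (HbarC * sigmaX) 0 0 = 0 := by
      have := congrFun (congrFun h 0) 0
      simpa using this
    rw [T00, mul_one] at h0
    exact (pow_ne_zero _ two_ne_zero) h0
  · have hsum0 : Summable (fun k : ℕ => (θ⁻¹ ^ k • (HbarC * sigmaX) ^ k) 0 0) :=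
      hsum.map (Matrix.entryLinearMap ℂ ℂ 0 0)
        (LinearMap.continuous_of_finiteDimensional _)
    have htend := hsum0.tendsto_atTop_zero
    have htend' : Filter.Tendsto
        (fun k : ℕ => ‖(θ⁻¹ ^ k • (HbarC * sigmaX) ^ k) 0 0‖)
        Filter.atTop (nhds 0) := by
      simpa using htend.norm
    have hval : ∀ k : ℕ, 1 ≤ k →
        ‖(θ⁻¹ ^ k • (HbarC * sigmaX) ^ k) 0 0‖
          = (2 / ‖θ‖) ^ k / 2 := by
      intro k hk
      rw [Tpow k hk]
      simp only [Matrix.smul_apply, smul_eq_mul, T00, mul_one]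
      rw [norm_mul, norm_pow, norm_pow, norm_inv, Complex.norm_two]
      have hθa : ‖θ‖ ≠ 0 := by simpa using hθ
      rw [div_pow]
      field_simp
      have h2 : (2:ℝ)^(k-1)*2 = 2^k := by
        rw [← pow_succ]
        congr 1
        omega
      rw [← h2, one_div, inv_pow, mul_assoc, mul_assoc, mul_left_comm _ (‖θ‖ ^ k), ← mul_assoc,
        inv_mul_cancel₀ (pow_ne_zero k hθa), one_mul]
    have hone : (1 : ℝ) < 2 / ‖θ‖ := by
      rw [lt_div_iff₀ (norm_pos_iff.mpr hθ)]
      linarith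
    have hdiv : Filter.Tendsto (fun k : ℕ => (2 / ‖θ‖) ^ k / 2)
        Filter.atTop Filter.atTop :=
      (tendsto_pow_atTop_atTop_of_one_lt hone).atTop_div_const (by norm_num)
    have hAT : Filter.Tendsto
        (fun k : ℕ => ‖(θ⁻¹ ^ k • (HbarC * sigmaX) ^ k) 0 0‖)
        Filter.atTop Filter.atTop := by
      refine hdiv.congr' ?_
      filter_upwards [Filter.eventually_ge_atTop 1] with k hk
      exact (hval k hk).symm
    exact not_tendsto_atTop_of_tendsto_nhds htend' hAT
end
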